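/- arXiv:1910.00225 — 3 statements merged into one kernel-verified Lean document; each statement's English description precedes it below -/
import Mathlib

section
/- Let A be a real m×n payoff matrix defining a finite two-player zero-sum strategic-form game and let M be any set of pure strategies of player 1 each of which is a mistake (assigned probability zero in every Nash equilibrium of A). Let A' be the matrix obtained from A by deleting all rows in M. Then for every Nash equilibrium (x*, y*) of A, the profile (x'*, y*), where x'* is x* restricted to the rows not in M, is a Nash equilibrium of A'. In particular, removing any subset of mistake strategies cannot reduce the set of equilibria. -/
/-!
A mistake carries no weight in any equilibrium `(x*, y*)`, so deleting its row changes neither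
`x*` as a mixed strategy nor any payoff `x*ᵀAy`. Conversely, a deviation of player 1 in the
reduced game extends by zero to a deviation in the full game with the same payoff. Hence both
equilibrium inequalities for `A` transfer verbatim to the reduced matrix.
-/

open Matrix BigOperators

/-- A mixed strategy: nonnegative components summing to 1. -/
def IsMixed {I : Type*} [Fintype I] (x : I → ℝ) : Prop :=
  (∀ i, 0 ≤ x i) ∧ ∑ i, x i = 1

/-- Player 1's expected payoff xᵀAy. -/
def payoff {I J : Type*} [Fintype I] [Fintype J]
    (A : Matrix I J ℝ) (x : I → ℝ) (y : J → ℝ) : ℝ :=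
  ∑ i, ∑ j, x i * A i j * y j

/-- Nash equilibrium of the zero-sum game with player-1 payoff matrix `A`. -/
def IsNash {I J : Type*} [Fintype I] [Fintype J]
    (A : Matrix I J ℝ) (x : I → ℝ) (y : J → ℝ) : Prop :=
  IsMixed x ∧ IsMixed y ∧
  (∀ x', IsMixed x' → payoff A x' y ≤ payoff A x y) ∧
  (∀ y', IsMixed y' → payoff A x y ≤ payoff A x y')

theorem Fintype.sum_subtype_eq_sum_of_eq_zero {ι M : Type*} [Fintype ι] [AddCommMonoid M]
    {p : ι → Prop} [DecidablePred p] {f : ι → M} (hf : ∀ i, ¬p i → f i = 0) :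
    ∑ i : Subtype p, f i = ∑ i, f i := by
  rw [← Fintype.sum_subtype_add_sum_subtype p f,
    Fintype.sum_eq_zero (fun i : {i // ¬p i} => f i) fun i => hf i i.2, add_zero]

theorem Function.extend_subtype_val_of_not {ι γ : Type*} [Zero γ] {p : ι → Prop}
    (x : Subtype p → γ) (i : ι) (hi : ¬p i) : Function.extend Subtype.val x 0 i = 0 :=
  Function.extend_apply' _ _ _ fun ⟨a, ha⟩ => hi (ha ▸ a.2)

section Restriction

variable {I J : Type*} [Fintype I] [Fintype J] {p : I → Prop} [DecidablePred p]

theorem IsMixed.restrict {x : I → ℝ} (hx : IsMixed x) (hzero : ∀ i, ¬p i → x i = 0) :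
    IsMixed (fun i : Subtype p => x i) :=
  ⟨fun i => hx.1 i, (Fintype.sum_subtype_eq_sum_of_eq_zero hzero).trans hx.2⟩

theorem IsMixed.extend {x : Subtype p → ℝ} (hx : IsMixed x) :
    IsMixed (Function.extend Subtype.val x 0) := by
  refine ⟨fun i => ?_, ?_⟩
  · by_cases hi : p i
    · exact (Subtype.val_injective.extend_apply x 0 ⟨i, hi⟩).symm ▸ hx.1 ⟨i, hi⟩
    · exact (Function.extend_subtype_val_of_not x i hi).symm ▸ le_rfl
  · rw [← Fintype.sum_subtype_eq_sum_of_eq_zero (Function.extend_subtype_val_of_not x)]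
    simpa only [Subtype.val_injective.extend_apply] using hx.2

theorem payoff_submatrix_val (A : Matrix I J ℝ) {x : I → ℝ} (hzero : ∀ i, ¬p i → x i = 0)
    (y : J → ℝ) :
    payoff (A.submatrix Subtype.val id) (fun i : Subtype p => x i) y = payoff A x y :=
  Fintype.sum_subtype_eq_sum_of_eq_zero (f := fun i => ∑ j, x i * A i j * y j) fun i hi => by
    simp only [hzero i hi, zero_mul, Finset.sum_const_zero]

theorem IsNash.submatrix_val {A : Matrix I J ℝ} {x : I → ℝ} {y : J → ℝ} (h : IsNash A x y)
    (hzero : ∀ i, ¬p i → x i = 0) :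
    IsNash (A.submatrix Subtype.val id) (fun i : Subtype p => x i) y := by
  obtain ⟨hx, hy, hbest₁, hbest₂⟩ := h
  refine ⟨hx.restrict hzero, hy, fun x' hx' => ?_, fun y' hy' => ?_⟩
  · have hrestrict : (fun i : Subtype p => Function.extend Subtype.val x' 0 i) = x' :=
      Function.extend_comp Subtype.val_injective x' 0
    rw [payoff_submatrix_val A hzero, ← hrestrict,
      payoff_submatrix_val A (Function.extend_subtype_val_of_not x')]
    exact hbest₁ _ hx'.extend
  · rw [payoff_submatrix_val A hzero, payoff_submatrix_val A hzero]
    exact hbest₂ y' hy'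

end Restriction

/-- Let `M` be any set of pure strategies of player 1 each of which is a mistake
(assigned probability zero in every Nash equilibrium of `A`), and let `A'` be the matrix
obtained from `A` by deleting all rows in `M`.  Then for every Nash equilibrium `(x*, y*)`
of `A`, the profile `(x'*, y*)`, where `x'*` is `x*` restricted to the rows not in `M`,
is a Nash equilibrium of `A'`.  Hence removing any subset of mistake strategies cannot
reduce the set of equilibria. -/
theorem mistake_subset_removal_preserves_equilibrium {m n : ℕ}
    (A : Matrix (Fin m) (Fin n) ℝ) (M : Finset (Fin m))
    (hmistakes : ∀ k ∈ M, ∀ x y, IsNash A x y → x k = 0)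
    (xstar : Fin m → ℝ) (ystar : Fin n → ℝ)
    (heq : IsNash A xstar ystar) :
    IsNash (fun (i : {i : Fin m // i ∉ M}) (j : Fin n) => A i.1 j)
      (fun (i : {i : Fin m // i ∉ M}) => xstar i.1) ystar :=
  heq.submatrix_val fun k hk => hmistakes k (not_not.mp hk) xstar ystar heq
end

section
/- Let A be a real m×n payoff matrix defining a finite two-player zero-sum strategic-form game, and suppose pure strategy k of player 1 is strictly dominated by some mixed strategy x' of player 1 (i.e., the payoff of x' against every pure strategy of player 2 strictly exceeds that of k). Then every Nash equilibrium (x*, y*) satisfies x*_k = 0; that is, every strictly dominated pure strategy is a mistake. -/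
open Matrix BigOperators

/-! A strategy `x` that plays `k` with positive weight is improved by handing that weight over
to a strategy `x'` beating `k` against `y`: the deviation `x + x k • (x' - Pi.single k 1)`
gains `x k * (payoff A x' y - (A *ᵥ y) k) > 0`, so `x` is not a best response to `y`. -/

section

variable {I J : Type*} [Fintype I] [Fintype J]

theorem payoff_eq_dotProduct_mulVec (A : Matrix I J ℝ) (x : I → ℝ) (y : J → ℝ) :
    payoff A x y = x ⬝ᵥ (A *ᵥ y) := by
  simp only [payoff, dotProduct, mulVec, Finset.mul_sum, mul_assoc]

theorem IsMixed.exists_pos {x : I → ℝ} (hx : IsMixed x) : ∃ i, 0 < x i := by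
  by_contra! h
  have hzero : ∑ i, x i = 0 := Finset.sum_eq_zero fun i _ => (h i).antisymm (hx.1 i)
  exact zero_ne_one (hzero.symm.trans hx.2)

theorem IsMixed.dotProduct_lt_dotProduct {y u v : J → ℝ} (hy : IsMixed y)
    (huv : ∀ j, u j < v j) : u ⬝ᵥ y < v ⬝ᵥ y := by
  obtain ⟨j, hj⟩ := hy.exists_pos
  exact Finset.sum_lt_sum (fun i _ => mul_le_mul_of_nonneg_right (huv i).le (hy.1 i))
    ⟨j, Finset.mem_univ j, mul_lt_mul_of_pos_right (huv j) hj⟩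

variable [DecidableEq I]

theorem IsMixed.add_smul_sub_single {x x' : I → ℝ} (hx : IsMixed x) (hx' : IsMixed x')
    (k : I) : IsMixed (x + x k • (x' - Pi.single k 1)) := by
  refine ⟨fun i => ?_, ?_⟩
  · rcases eq_or_ne i k with rfl | hik
    · have : 0 ≤ x i * x' i := mul_nonneg (hx.1 i) (hx'.1 i)
      simp only [Pi.add_apply, Pi.smul_apply, Pi.sub_apply, Pi.single_eq_same, smul_eq_mul]
      linarith
    · simp only [Pi.add_apply, Pi.smul_apply, Pi.sub_apply, Pi.single_eq_of_ne hik, smul_eq_mul]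
      have : 0 ≤ x k * x' i := mul_nonneg (hx.1 k) (hx'.1 i)
      linarith [hx.1 i]
  · simp [Finset.sum_add_distrib, Finset.sum_sub_distrib, ← Finset.mul_sum, hx.2, hx'.2]

theorem payoff_add_smul_sub_single (A : Matrix I J ℝ) (x x' : I → ℝ) (y : J → ℝ) (k : I) :
    payoff A (x + x k • (x' - Pi.single k 1)) y
      = payoff A x y + x k * (payoff A x' y - (A *ᵥ y) k) := by
  simp only [payoff_eq_dotProduct_mulVec, add_dotProduct, smul_dotProduct, sub_dotProduct,
    single_one_dotProduct, smul_eq_mul]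

end

/-- If pure strategy `k` of player 1 is strictly dominated by some mixed strategy `x'`
(the payoff of `x'` against every pure strategy of player 2 strictly exceeds that of `k`),
then every Nash equilibrium `(x*, y*)` satisfies `x*_k = 0`: every strictly dominated
pure strategy is a mistake. -/
theorem strictly_dominated_is_mistake {m n : ℕ}
    (A : Matrix (Fin m) (Fin n) ℝ) (k : Fin m) (x' : Fin m → ℝ)
    (hx' : IsMixed x')
    (hdom : ∀ j, A k j < ∑ i, x' i * A i j) :
    ∀ xstar ystar, IsNash A xstar ystar → xstar k = 0 := by
  rintro xstar ystar ⟨hx, hy, hbest, -⟩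
  by_contra hk
  have hpos : 0 < xstar k := (hx.1 k).lt_of_ne' hk
  have hgain : (A *ᵥ ystar) k < payoff A x' ystar := by
    rw [payoff_eq_dotProduct_mulVec, dotProduct_mulVec]
    exact hy.dotProduct_lt_dotProduct hdom
  have hdev := hbest _ (hx.add_smul_sub_single hx' k)
  rw [payoff_add_smul_sub_single] at hdev
  exact hdev.not_gt (lt_add_of_pos_right _ (mul_pos hpos (sub_pos.2 hgain)))
end

section
/- Let A be a real m×n payoff matrix defining a finite two-player zero-sum strategic-form game, and suppose the pure strategy k of player 1 is weakly dominated by a mixed strategy x' of player 1. Then any mixed strategy x of player 1 with x_k > 0 is itself weakly dominated, namely by the mixed strategy obtained from x by transferring the probability mass x_k from pure strategy k to the distribution x'. -/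
open Matrix BigOperators

/-- The mixed strategy obtained from `x` by transferring the probability mass `x k`
from pure strategy `k` to the distribution `x'`. -/
def transfer {m : ℕ} (x x' : Fin m → ℝ) (k : Fin m) : Fin m → ℝ :=
  fun i => (if i = k then 0 else x i) + x k * x' i

section Transfer

variable {m : ℕ} (x x' : Fin m → ℝ) (k : Fin m)

theorem sum_transfer_mul (f : Fin m → ℝ) :
    ∑ i, transfer x x' k i * f i = ∑ i, x i * f i + x k * (∑ i, x' i * f i - f k) := by
  have hterm : ∀ i, transfer x x' k i * f i
      = x i * f i + x k * (x' i * f i - if k = i then f i else 0) := by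
    intro i
    rcases eq_or_ne i k with rfl | hik
    · simp only [transfer, ↓reduceIte]; ring
    · simp only [transfer, if_neg hik, if_neg hik.symm]; ring
  rw [Finset.sum_congr rfl fun i _ => hterm i, Finset.sum_add_distrib, ← Finset.mul_sum,
    Finset.sum_sub_distrib, Finset.sum_ite_eq, if_pos (Finset.mem_univ k)]

theorem sum_transfer : ∑ i, transfer x x' k i = ∑ i, x i + x k * (∑ i, x' i - 1) := by
  simpa only [mul_one] using sum_transfer_mul x x' k fun _ => 1

variable {x x'}

theorem IsMixed.transfer (hx : IsMixed x) (hx' : IsMixed x') : IsMixed (transfer x x' k) := by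
  refine ⟨fun i => ?_, ?_⟩
  · have hmass : 0 ≤ x k * x' i := mul_nonneg (hx.1 k) (hx'.1 i)
    rcases eq_or_ne i k with rfl | hik
    · simpa only [_root_.transfer, ↓reduceIte, zero_add] using hmass
    · simpa only [_root_.transfer, if_neg hik] using add_nonneg (hx.1 i) hmass
  · rw [sum_transfer, hx.2, hx'.2, sub_self, mul_zero, add_zero]

end Transfer

/-- If pure strategy `k` of player 1 is weakly dominated by a mixed strategy `x'`, then any
mixed strategy `x` of player 1 with `x k > 0` is itself weakly dominated, namely by the
mixed strategy obtained from `x` by transferring the probability mass `x k` from pure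
strategy `k` to the distribution `x'`. -/
theorem mixed_with_weakly_dominated_support_is_weakly_dominated {m n : ℕ}
    (A : Matrix (Fin m) (Fin n) ℝ) (k : Fin m) (x' : Fin m → ℝ)
    (hx' : IsMixed x')
    (hdom : (∀ j, A k j ≤ ∑ i, x' i * A i j) ∧ (∃ j, A k j < ∑ i, x' i * A i j))
    (x : Fin m → ℝ) (hx : IsMixed x) (hk : 0 < x k) :
    IsMixed (transfer x x' k) ∧
    (∀ j, ∑ i, x i * A i j ≤ ∑ i, transfer x x' k i * A i j) ∧
    (∃ j, ∑ i, x i * A i j < ∑ i, transfer x x' k i * A i j) := by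
  obtain ⟨hweak, j₀, hstrict⟩ := hdom
  refine ⟨hx.transfer k hx', fun j => ?_, j₀, ?_⟩
  · rw [sum_transfer_mul x x' k (A · j)]
    exact le_add_of_nonneg_right (mul_nonneg hk.le (sub_nonneg.2 (hweak j)))
  · rw [sum_transfer_mul x x' k (A · j₀)]
    exact lt_add_of_pos_right _ (mul_pos hk (sub_pos.2 hstrict))
end
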